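/- arXiv:1605.01166 — 3 statements merged into one kernel-verified Lean document; each statement's English description precedes it below -/
import Mathlib

section
/- Let G be a finite non-abelian p-group of conjugate type (n,1) with [G : Z(G)] = p^k. If the number of z-classes of G is (p^k − 1)/(p − 1) + 1, then for every x ∈ G \ Z(G), Z(C_G(x)) = ⟨x, Z(G)⟩. -/
open Pointwise

/-- Two elements of a group are z-equivalent if their centralizers are conjugate. -/
def zEquiv (G : Type*) [Group G] (x y : G) : Prop :=
  ∃ g : ConjAct G, g • Subgroup.centralizer {x} = Subgroup.centralizer {y}

section AuxZ
variable {G : Type*} [Group G] [Finite G]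

private lemma auxZ_eq_of_le_of_index_eq {H K : Subgroup G} (h : H ≤ K) (hi : H.index = K.index) :
    H = K := by
  have h1 : H.relIndex K * K.index = H.index := Subgroup.relIndex_mul_index h
  have h2 : K.index ≠ 0 := Subgroup.index_ne_zero_of_finite
  have h3 : H.relIndex K = 1 := by
    have : H.relIndex K * K.index = 1 * K.index := by rw [h1, hi, one_mul]
    exact Nat.eq_of_mul_eq_mul_right (Nat.pos_of_ne_zero h2) this
  exact le_antisymm h (Subgroup.relIndex_eq_one.mp h3)

private lemma auxZ_card_mul_le {p : ℕ} (hp : p.Prime) (hpG : IsPGroup p G) {Z K : Subgroup G}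
    (hZK : Z ≤ K) (hne : Z ≠ K) : Nat.card Z * p ≤ Nat.card K := by
  haveI : Fact p.Prime := ⟨hp⟩
  haveI : (Z.subgroupOf K).FiniteIndex := ⟨Subgroup.index_ne_zero_of_finite⟩
  obtain ⟨m, hm⟩ := (hpG.to_subgroup K).index (Z.subgroupOf K)
  have hcard : Nat.card (Z.subgroupOf K) * (Z.subgroupOf K).index = Nat.card K :=
    Subgroup.card_mul_index _
  have hcz : Nat.card (Z.subgroupOf K) = Nat.card Z :=
    Nat.card_congr (Subgroup.subgroupOfEquivOfLe hZK).toEquiv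
  have hm1 : 1 ≤ m := by
    by_contra h
    push_neg at h
    interval_cases m
    · simp only [pow_zero] at hm
      exact hne (le_antisymm hZK (Subgroup.subgroupOf_eq_top.mp (Subgroup.index_eq_one.mp hm)))
  calc Nat.card Z * p ≤ Nat.card Z * p ^ m :=
        Nat.mul_le_mul_left _ (by
          calc p = p ^ 1 := (pow_one p).symm
            _ ≤ p ^ m := Nat.pow_le_pow_right hp.one_lt.le hm1)
    _ = Nat.card K := by rw [← hcard, hcz, hm]

private lemma auxZ_eq_of_le_of_card_le {H K : Subgroup G} (h : H ≤ K)
    (hc : Nat.card K ≤ Nat.card H) : H = K := by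
  apply SetLike.coe_injective
  refine Set.eq_of_subset_of_ncard_le h ?_ (Set.toFinite _)
  rw [← Nat.card_coe_set_eq, ← Nat.card_coe_set_eq]
  exact hc

private lemma auxZ_filter_card {α : Type*} [Fintype α] (P : α → Prop) [DecidablePred P]
    [Fintype {y // P y}] : (Finset.univ.filter P).card = Nat.card {y // P y} := by
  rw [Nat.card_eq_fintype_card]
  exact (Fintype.card_of_subtype _ (by simp)).symm

end AuxZ

theorem center_centralizer_eq_closure_of_max_zClasses {G : Type*} [Group G] [Finite G]
    {p k n : ℕ} (hp : p.Prime) (hpG : IsPGroup p G)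
    (hna : ¬ ∀ a b : G, a * b = b * a) (hn : 1 < n)
    (htype : ∀ y : G, y ∉ Subgroup.center G → (Subgroup.centralizer {y}).index = n)
    (hk : (Subgroup.center G).index = p ^ k)
    (hz : Nat.card (Quot (zEquiv G)) = (p ^ k - 1) / (p - 1) + 1)
    {x : G} (hx : x ∉ Subgroup.center G) :
    Subgroup.centralizer {x} ⊓
        Subgroup.centralizer (Subgroup.centralizer ({x} : Set G) : Set G) =
      Subgroup.closure (insert x (Subgroup.center G : Set G)) := by
  classical
  haveI : Fintype G := Fintype.ofFinite G
  set Z := Subgroup.center G with hZdef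
  set cZ := Nat.card Z with hcZdef
  set f : G → Subgroup G := fun y => Subgroup.centralizer ({y} : Set G) with hfdef
  set ZC : Subgroup G → Subgroup G := fun H => H ⊓ Subgroup.centralizer (H : Set G) with hZCdef
  set s := (p ^ k - 1) / (p - 1) with hsdef
  set c := cZ * (p - 1) with hcdef
  -- centralizers of noncentral elements that are comparable are equal
  have hCeq : ∀ y y' : G, y ∉ Z → y' ∉ Z → f y ≤ f y' → f y = f y' := fun y y' hy hy' hle =>
    auxZ_eq_of_le_of_index_eq hle ((htype y hy).trans (htype y' hy').symm)
  -- every element lies in the "center" of its own centralizer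
  have hself : ∀ y : G, y ∈ ZC (f y) := fun y =>
    ⟨Subgroup.mem_centralizer_iff.mpr (by simp),
      Subgroup.mem_centralizer_iff.mpr fun h hh =>
        ((Subgroup.mem_centralizer_iff.mp hh) y rfl).symm⟩
  -- fibers of the centralizer map
  have hfiber : ∀ x0 y : G, x0 ∉ Z → y ∉ Z → (f y = f x0 ↔ y ∈ ZC (f x0)) := by
    intro x0 y hx0 hy
    constructor
    · intro h; rw [← h]; exact hself y
    · rintro ⟨h1, h2⟩
      refine (hCeq x0 y hx0 hy ?_).symm
      intro h hh
      refine Subgroup.mem_centralizer_iff.mpr ?_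
      intro g hg
      rw [Set.mem_singleton_iff] at hg
      subst hg
      exact ((Subgroup.mem_centralizer_iff.mp h2) h hh).symm
  have hZle : ∀ x0 : G, Z ≤ ZC (f x0) := fun x0 =>
    le_inf (Subgroup.center_le_centralizer _) (Subgroup.center_le_centralizer _)
  -- finsets
  set S : Finset G := Finset.univ.filter (fun y => y ∉ Z) with hSdef
  set T : Finset (Subgroup G) := S.image f with hTdef
  have hZc : (Finset.univ.filter (fun y => y ∈ Z)).card = cZ := by
    rw [hcZdef]; exact auxZ_filter_card _
  have hcardS : cZ + S.card = Fintype.card G := by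
    have h1 : (Finset.univ.filter (fun y => y ∈ Z)).card +
        (Finset.univ.filter (fun y => y ∉ Z)).card = (Finset.univ : Finset G).card :=
      Finset.card_filter_add_card_filter_not (fun y => y ∈ Z)
    rw [hZc] at h1
    rw [hSdef, ← Finset.card_univ]
    exact h1
  -- the fiber over H ∈ T is (ZC H) \ Z
  have hfibcard : ∀ H ∈ T, cZ + (S.filter (fun y => f y = H)).card = Nat.card (ZC H) := by
    intro H hH
    obtain ⟨x0, hx0S, hfx0⟩ := Finset.mem_image.mp hH
    have hx0 : x0 ∉ Z := (Finset.mem_filter.mp hx0S).2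
    subst hfx0
    have key : S.filter (fun y => f y = f x0) =
        (Finset.univ.filter (fun y => y ∈ ZC (f x0))).filter (fun y => ¬ y ∈ Z) := by
      ext y
      simp only [Finset.mem_filter, Finset.mem_univ, true_and, hSdef]
      constructor
      · rintro ⟨hy, hfy⟩
        exact ⟨(hfiber x0 y hx0 hy).mp hfy, hy⟩
      · rintro ⟨hy1, hy2⟩
        exact ⟨hy2, (hfiber x0 y hx0 hy2).mpr hy1⟩
    have key2 : (Finset.univ.filter (fun y => y ∈ ZC (f x0))).filter (fun y => y ∈ Z) =
        Finset.univ.filter (fun y => y ∈ Z) := by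
      ext y
      simp only [Finset.mem_filter, Finset.mem_univ, true_and, and_iff_right_iff_imp]
      exact fun hyZ => hZle x0 hyZ
    have hA : (Finset.univ.filter (fun y => y ∈ ZC (f x0))).card = Nat.card (ZC (f x0)) :=
      auxZ_filter_card _
    calc cZ + (S.filter (fun y => f y = f x0)).card
        = ((Finset.univ.filter (fun y => y ∈ ZC (f x0))).filter (fun y => y ∈ Z)).card +
          ((Finset.univ.filter (fun y => y ∈ ZC (f x0))).filter (fun y => ¬ y ∈ Z)).card := by
          rw [key, key2, hZc]
      _ = (Finset.univ.filter (fun y => y ∈ ZC (f x0))).card :=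
          Finset.card_filter_add_card_filter_not (fun y => y ∈ Z)
      _ = Nat.card (ZC (f x0)) := hA
  -- lower bound on each "center"
  have hZClb : ∀ H ∈ T, cZ * p ≤ Nat.card (ZC H) := by
    intro H hH
    obtain ⟨x0, hx0S, hfx0⟩ := Finset.mem_image.mp hH
    have hx0 : x0 ∉ Z := (Finset.mem_filter.mp hx0S).2
    subst hfx0
    refine auxZ_card_mul_le hp hpG (hZle x0) ?_
    intro h
    exact hx0 (h ▸ hself x0)
  have hcp : cZ + c = cZ * p := by
    have h1 : p - 1 + 1 = p := Nat.succ_pred_eq_of_pos hp.pos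
    calc cZ + c = cZ * (p - 1 + 1) := by rw [hcdef]; ring
      _ = cZ * p := by rw [h1]
  have hfib_lb : ∀ H ∈ T, c ≤ (S.filter (fun y => f y = H)).card := by
    intro H hH
    have h1 := hfibcard H hH
    have h2 := hZClb H hH
    have h3 : cZ + c ≤ cZ + (S.filter (fun y => f y = H)).card := by
      rw [hcp, h1]; exact h2
    exact Nat.le_of_add_le_add_left h3
  -- sum of fibers
  have hsum : ∑ H ∈ T, (S.filter (fun y => f y = H)).card = S.card :=
    (Finset.card_eq_sum_card_fiberwise (fun y hy => Finset.mem_image_of_mem f hy)).symm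
  -- total count
  have hpk1 : 1 ≤ p ^ k := Nat.one_le_pow _ _ hp.pos
  have hdvd : p - 1 ∣ p ^ k - 1 := by
    have := Nat.sub_dvd_pow_sub_pow p 1 k
    simpa using this
  have hs : s * (p - 1) = p ^ k - 1 := Nat.div_mul_cancel hdvd
  have hcG : Fintype.card G = cZ * p ^ k := by
    rw [← Nat.card_eq_fintype_card, hcZdef, ← Subgroup.card_mul_index Z, hk]
  have hScard : S.card = s * c := by
    have e1 : cZ * p ^ k = s * c + cZ := by
      have e2 : p ^ k = s * (p - 1) + 1 := by omega
      rw [e2, hcdef]; ring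
    have := hcardS
    rw [hcG, e1] at this
    omega
  -- cZ and c are positive
  have hcZpos : 0 < cZ := Nat.card_pos
  have hcpos : 0 < c := by
    rw [hcdef]
    have := hp.two_le
    exact Nat.mul_pos hcZpos (by omega)
  -- upper bound : T.card ≤ s
  have hub : T.card ≤ s := by
    have h1 : T.card * c ≤ s * c := by
      calc T.card * c = ∑ _H ∈ T, c := by rw [Finset.sum_const, smul_eq_mul]
        _ ≤ ∑ H ∈ T, (S.filter (fun y => f y = H)).card := Finset.sum_le_sum hfib_lb
        _ = S.card := hsum
        _ = s * c := hScard
    exact Nat.le_of_mul_le_mul_right h1 hcpos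
  -- lower bound : s ≤ T.card, via a surjection onto the z-classes
  have hlb : s ≤ T.card := by
    have hsurj : Function.Surjective
        (fun o : Option {H // H ∈ T} =>
          o.elim (Quot.mk (zEquiv G) 1)
            (fun H => Quot.mk (zEquiv G) (Finset.mem_image.mp H.2).choose)) := by
      intro q
      obtain ⟨y, rfl⟩ := Quot.exists_rep q
      by_cases hy : y ∈ Z
      · refine ⟨none, Quot.sound ⟨1, ?_⟩⟩
        rw [one_smul]
        have h1 : Subgroup.centralizer ({1} : Set G) = ⊤ :=
          Subgroup.centralizer_eq_top_iff_subset.mpr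
            (Set.singleton_subset_iff.mpr (Subgroup.one_mem _))
        have h2 : Subgroup.centralizer ({y} : Set G) = ⊤ :=
          Subgroup.centralizer_eq_top_iff_subset.mpr (by simpa using hy)
        rw [h1, h2]
      · have hyT : f y ∈ T :=
          Finset.mem_image_of_mem f (Finset.mem_filter.mpr ⟨Finset.mem_univ y, hy⟩)
        refine ⟨some ⟨f y, hyT⟩, Quot.sound ⟨1, ?_⟩⟩
        rw [one_smul]
        exact (Finset.mem_image.mp hyT).choose_spec.2
    have h2 := Nat.card_le_card_of_surjective _ hsurj
    have h3 : Nat.card (Option {H // H ∈ T}) = T.card + 1 := by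
      simp [Nat.card_eq_fintype_card]
    rw [hz, h3] at h2
    omega
  have hT : T.card = s := le_antisymm hub hlb
  -- the fiber of x has exactly c elements
  have hxS : x ∈ S := Finset.mem_filter.mpr ⟨Finset.mem_univ x, hx⟩
  have hH0 : f x ∈ T := Finset.mem_image_of_mem f hxS
  have hsplit : (S.filter (fun y => f y = f x)).card +
      ∑ H ∈ T.erase (f x), (S.filter (fun y => f y = H)).card = s * c :=
    (Finset.add_sum_erase T _ hH0).trans (hsum.trans hScard)
  have herase : (s - 1) * c ≤ ∑ H ∈ T.erase (f x), (S.filter (fun y => f y = H)).card := by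
    have h1 := Finset.card_nsmul_le_sum (T.erase (f x))
      (fun H => (S.filter (fun y => f y = H)).card) c
      (fun H hH => hfib_lb H (Finset.mem_of_mem_erase hH))
    rw [Finset.card_erase_of_mem hH0, hT] at h1
    simpa [smul_eq_mul] using h1
  have hs1 : 1 ≤ s := by
    rw [← hT]
    exact Finset.card_pos.mpr ⟨f x, hH0⟩
  have hsc : s * c = (s - 1) * c + c := by
    calc s * c = (s - 1 + 1) * c := by rw [Nat.sub_add_cancel hs1]
      _ = (s - 1) * c + c := by ring
  have hfib_ub : (S.filter (fun y => f y = f x)).card ≤ c := by omega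
  have hZCub : Nat.card (ZC (f x)) ≤ cZ * p := by
    have h1 := hfibcard (f x) hH0
    omega
  -- finish
  set K := Subgroup.closure (insert x (Z : Set G)) with hKdef
  have hKle : K ≤ ZC (f x) := by
    rw [hKdef]
    refine (Subgroup.closure_le _).mpr ?_
    rw [Set.insert_subset_iff]
    exact ⟨hself x, hZle x⟩
  have hZK : Z ≤ K := fun g hg => Subgroup.subset_closure (Set.mem_insert_of_mem _ hg)
  have hxK : x ∈ K := Subgroup.subset_closure (Set.mem_insert _ _)
  have hZneK : Z ≠ K := by
    intro h
    rw [← h] at hxK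
    exact hx hxK
  have h1 : cZ * p ≤ Nat.card K := auxZ_card_mul_le hp hpG hZK hZneK
  have h2 : Nat.card K ≤ Nat.card (ZC (f x)) := Subgroup.card_le_of_le hKle
  have final : K = ZC (f x) := auxZ_eq_of_le_of_card_le hKle (by omega)
  have final2 := final.symm
  simp only [hZCdef, hfdef] at final2
  exact final2
end

section
/- Let G be an extraspecial p-group with |G/Z(G)| = p^k. Then the number of z-classes of G is (p^k − 1)/(p − 1) + 1. -/
open Pointwise

/-- A finite `p`-group is extraspecial if its center equals its commutator subgroup
and has order `p`. -/
def IsExtraspecial (p : ℕ) (G : Type*) [Group G] : Prop :=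
  IsPGroup p G ∧ Subgroup.center G = commutator G ∧ Nat.card (Subgroup.center G) = p

/-!
Since `G' = Z(G)`, commutators are central, so `x ↦ ⁅x, ·⁆` induces an injective homomorphism
from `G ⧸ Z(G)` into `Hom(G, Z(G))` sending `x` to a homomorphism with kernel `C_G(x)`.
Centralizers are therefore normal, so two elements are z-equivalent iff their centralizers
coincide; and because `Z(G)` has prime order, two such kernels coincide iff the images of the
elements generate the same cyclic subgroup of `G ⧸ Z(G)`. So z-classes correspond to cyclic
subgroups of the group `G ⧸ Z(G)` of exponent `p` and order `p ^ k`: the trivial one, and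
`(p ^ k - 1) / (p - 1)` of order `p`.
-/

open Subgroup Finset
open scoped commutatorElement IsMulCommutative

theorem Nat.card_quot_eq_card_range {α β : Type*} {r : α → α → Prop} (f : α → β)
    (hr : ∀ x y, r x y ↔ f x = f y) : Nat.card (Quot r) = Nat.card (Set.range f) :=
  Nat.card_congr <| (Quot.congr (Equiv.refl α) hr).trans (Setoid.quotientKerEquivRange f)

theorem Subgroup.conjAct_smul_eq_self_of_normal {G : Type*} [Group G] (H : Subgroup G)
    [H.Normal] (g : ConjAct G) : g • H = H :=
  conjAct_pointwise_smul_eq_self (g := ConjAct.ofConjAct g)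
    (normalizer_eq_top (H := H) ▸ mem_top _)

theorem MonoidHom.exists_eq_zpow_of_ker_le {G H : Type*} [Group G] [CommGroup H] [IsCyclic H]
    {f f' : G →* H} (hf : Function.Surjective f) (hle : f.ker ≤ f'.ker) :
    ∃ m : ℤ, f' = f ^ m := by
  obtain ⟨m, hm⟩ := (f.liftOfSurjective hf ⟨f', hle⟩).map_cyclic
  refine ⟨m, MonoidHom.ext fun g => ?_⟩
  rw [MonoidHom.zpow_apply, ← hm]
  simp

theorem MonoidHom.ker_le_ker_iff_mem_zpowers {Q G Z : Type*} [Group Q] [Group G] [CommGroup Z]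
    [Fact (Nat.card Z).Prime] {ψ : Q →* G →* Z} (hψ : Function.Injective ψ) {a b : Q} :
    (ψ a).ker ≤ (ψ b).ker ↔ b ∈ zpowers a := by
  constructor
  · intro hle
    by_cases ha : ψ a = 1
    · rw [ha, MonoidHom.ker_one, top_le_iff, MonoidHom.ker_eq_top_iff, ← ψ.map_one] at hle
      rw [hψ hle]
      exact one_mem _
    · have hsurj : Function.Surjective (ψ a) := by
        rw [← MonoidHom.range_eq_top]
        refine (eq_bot_or_eq_top_of_prime_card _).resolve_left ?_
        rwa [MonoidHom.range_eq_bot_iff]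
      have := isCyclic_of_prime_card (α := Z) rfl
      obtain ⟨m, hm⟩ := MonoidHom.exists_eq_zpow_of_ker_le hsurj hle
      rw [← map_zpow] at hm
      exact ⟨m, (hψ hm).symm⟩
  · rintro ⟨m, rfl⟩ g hg
    rw [MonoidHom.mem_ker] at hg ⊢
    rw [map_zpow, MonoidHom.zpow_apply, hg, one_zpow]

theorem zpowers_eq_zpowers_iff_of_pow_prime_eq_one {Q : Type*} [Group Q] {p : ℕ}
    [hp : Fact p.Prime] (hQ : ∀ a : Q, a ^ p = 1) {a b : Q} (ha : a ≠ 1) :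
    zpowers b = zpowers a ↔ b ≠ 1 ∧ b ∈ zpowers a := by
  constructor
  · intro h
    refine ⟨fun hb => ha ?_, h ▸ mem_zpowers b⟩
    rwa [hb, zpowers_one_eq_bot, eq_comm, zpowers_eq_bot] at h
  · rintro ⟨hb, hba⟩
    have : Finite (zpowers a) :=
      (isOfFinOrder_iff_pow_eq_one.2 ⟨p, hp.out.pos, hQ a⟩).finite_zpowers
    refine eq_of_le_of_card_ge (zpowers_le.mpr hba) ?_
    rw [Nat.card_zpowers, Nat.card_zpowers, orderOf_eq_prime (hQ a) ha,
      orderOf_eq_prime (hQ b) hb]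

theorem card_range_zpowers_of_pow_prime_eq_one {Q : Type*} [Group Q] [Finite Q] {p : ℕ}
    [hp : Fact p.Prime] (hQ : ∀ a : Q, a ^ p = 1) :
    Nat.card (Set.range (zpowers : Q → Subgroup Q)) = (Nat.card Q - 1) / (p - 1) + 1 := by
  classical
  have := Fintype.ofFinite Q
  set s := univ.erase (1 : Q)
  set S := s.image zpowers
  have hfiber : ∀ H ∈ S, #{b ∈ s | zpowers b = H} = p - 1 := by
    simp only [S, s, mem_image, mem_erase]
    rintro _ ⟨a, ⟨ha, -⟩, rfl⟩
    have hgen : {b ∈ s | zpowers b = zpowers a} = (zpowers a : Set Q).toFinset.erase 1 := by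
      ext b
      simp [s, zpowers_eq_zpowers_iff_of_pow_prime_eq_one hQ ha, and_comm]
    rw [hgen, card_erase_of_mem (by simp), Set.toFinset_card, ← Nat.card_eq_fintype_card,
      SetLike.coe_sort_coe, Nat.card_zpowers, orderOf_eq_prime (hQ a) ha]
  have hcard : Nat.card Q - 1 = (p - 1) * #S := by
    rw [Nat.card_eq_fintype_card, ← card_univ, ← card_erase_of_mem (mem_univ 1)]
    exact le_antisymm (card_le_mul_card_image _ _ fun H hH => (hfiber H hH).le)
      (mul_card_image_le_card _ _ fun H hH => (hfiber H hH).ge)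
  have hrange : Set.range (zpowers : Q → Subgroup Q) = insert ⊥ S := by
    ext H
    simp only [Set.mem_range, coe_insert, Set.mem_insert_iff, mem_coe, S, s, mem_image,
      mem_erase, mem_univ, and_true]
    constructor
    · rintro ⟨a, rfl⟩
      by_cases ha : a = 1
      · exact Or.inl (ha ▸ zpowers_one_eq_bot)
      · exact Or.inr ⟨a, ha, rfl⟩
    · rintro (rfl | ⟨a, -, rfl⟩)
      · exact ⟨1, zpowers_one_eq_bot⟩
      · exact ⟨a, rfl⟩
  have hbot : ⊥ ∉ S := by simp [S, s]
  rw [hrange, Nat.card_coe_set_eq, Set.ncard_coe_finset, card_insert_of_notMem hbot, hcard,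
    Nat.mul_div_cancel_left _ (Nat.sub_pos_of_lt hp.out.one_lt)]

section CentralCommutators

variable {G : Type*} [Group G]

theorem commutatorElement_mem_center (hc : commutator G ≤ center G) (x g : G) :
    ⁅x, g⁆ ∈ center G :=
  hc (commutator_mem_commutator (mem_top x) (mem_top g))

theorem commutatorElement_mul_right_of_le_center (hc : commutator G ≤ center G) (x g g' : G) :
    ⁅x, g * g'⁆ = ⁅x, g⁆ * ⁅x, g'⁆ := by
  rw [commutatorElement_mul_right_eq_mul_conj, mul_assoc _ g,
    mem_center_iff.mp (commutatorElement_mem_center hc x g') g, ← mul_assoc, mul_inv_cancel_right]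

theorem commutatorElement_mul_left_of_le_center (hc : commutator G ≤ center G) (x y g : G) :
    ⁅x * y, g⁆ = ⁅x, g⁆ * ⁅y, g⁆ := by
  have hyg := mem_center_iff.mp (commutatorElement_mem_center hc y g)
  rw [commutatorElement_mul_left_eq_conj_mul, hyg x, mul_inv_cancel_right, hyg]

def commutatorPairing (hc : commutator G ≤ center G) : G →* G →* center G :=
  MonoidHom.mk'
    (fun x => MonoidHom.mk' (fun g => ⟨⁅x, g⁆, commutatorElement_mem_center hc x g⟩)
      fun g g' => Subtype.ext (commutatorElement_mul_right_of_le_center hc x g g'))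
    fun x y => MonoidHom.ext fun g =>
      Subtype.ext (commutatorElement_mul_left_of_le_center hc x y g)

@[simp]
theorem commutatorPairing_apply (hc : commutator G ≤ center G) (x g : G) :
    (commutatorPairing hc x g : G) = ⁅x, g⁆ :=
  rfl

theorem ker_commutatorPairing_apply (hc : commutator G ≤ center G) (x : G) :
    (commutatorPairing hc x).ker = centralizer {x} := by
  ext g
  rw [MonoidHom.mem_ker, mem_centralizer_singleton_iff, ← Subtype.coe_inj,
    commutatorPairing_apply, OneMemClass.coe_one, commutatorElement_eq_one_iff_mul_comm, eq_comm]

theorem ker_commutatorPairing (hc : commutator G ≤ center G) :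
    (commutatorPairing hc).ker = center G := by
  ext x
  rw [MonoidHom.mem_ker, ← MonoidHom.ker_eq_top_iff, ker_commutatorPairing_apply,
    centralizer_eq_top_iff_subset, Set.singleton_subset_iff, SetLike.mem_coe]

theorem zEquiv_iff_centralizer_eq (hc : commutator G ≤ center G) {x y : G} :
    zEquiv G x y ↔ centralizer {x} = centralizer {y} := by
  have : (centralizer {x}).Normal := ker_commutatorPairing_apply hc x ▸ MonoidHom.normal_ker _
  simp only [zEquiv, conjAct_smul_eq_self_of_normal, exists_const]

def centralPairing (hc : commutator G ≤ center G) : G ⧸ center G →* G →* center G :=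
  QuotientGroup.lift _ (commutatorPairing hc) (ker_commutatorPairing hc).ge

theorem centralPairing_injective (hc : commutator G ≤ center G) :
    Function.Injective (centralPairing hc) :=
  (QuotientGroup.injective_lift_iff _ _ _).2 (ker_commutatorPairing hc).symm

theorem ker_centralPairing_mk (hc : commutator G ≤ center G) (x : G) :
    (centralPairing hc x).ker = centralizer {x} :=
  ker_commutatorPairing_apply hc x

theorem pow_card_center_eq_one (hc : commutator G ≤ center G) (a : G ⧸ center G) :
    a ^ Nat.card (center G) = 1 :=
  centralPairing_injective hc <| by
    ext g
    rw [map_pow, MonoidHom.pow_apply, pow_card_eq_one', map_one, MonoidHom.one_apply]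

theorem centralizer_le_centralizer_iff (hc : commutator G ≤ center G)
    [Fact (Nat.card (center G)).Prime] {x y : G} :
    centralizer {x} ≤ centralizer {y} ↔
      (y : G ⧸ center G) ∈ zpowers (x : G ⧸ center G) := by
  rw [← ker_centralPairing_mk hc, ← ker_centralPairing_mk hc]
  exact MonoidHom.ker_le_ker_iff_mem_zpowers (centralPairing_injective hc)

theorem centralizer_eq_centralizer_iff (hc : commutator G ≤ center G)
    [Fact (Nat.card (center G)).Prime] {x y : G} :
    centralizer {x} = centralizer {y} ↔
      zpowers (x : G ⧸ center G) = zpowers (y : G ⧸ center G) := by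
  rw [le_antisymm_iff, le_antisymm_iff, zpowers_le, zpowers_le,
    centralizer_le_centralizer_iff hc, centralizer_le_centralizer_iff hc, and_comm]

end CentralCommutators

theorem card_zClasses_of_extraspecial {G : Type*} [Group G] [Finite G] {p k : ℕ}
    (hp : p.Prime) (hG : IsExtraspecial p G)
    (hk : Nat.card (G ⧸ Subgroup.center G) = p ^ k) :
    Nat.card (Quot (zEquiv G)) = (p ^ k - 1) / (p - 1) + 1 := by
  obtain ⟨-, hcomm, hZ⟩ := hG
  have hc : commutator G ≤ center G := hcomm.ge
  have := Fact.mk hp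
  have : Fact (Nat.card (center G)).Prime := ⟨hZ ▸ hp⟩
  rw [Nat.card_quot_eq_card_range (zpowers ∘ (↑) : G → Subgroup (G ⧸ center G)) fun x y =>
      (zEquiv_iff_centralizer_eq hc).trans (centralizer_eq_centralizer_iff hc),
    QuotientGroup.mk_surjective.range_comp,
    card_range_zpowers_of_pow_prime_eq_one (hZ ▸ pow_card_center_eq_one hc), hk]
end

section
/- Let G be a finite non-abelian p-group and x ∈ G \ Z(G). Then the z-class of x contains the union x·Z(G) ∪ x²·Z(G) ∪ ⋯ ∪ x^{p−1}·Z(G) whenever G/Z(G) has exponent p; in particular the z-class of x has size at least (p−1)·|Z(G)|. -/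
open Pointwise

private lemma commute_of_commute_pow {G : Type*} [Group G] {p i : ℕ} {x c : G}
    (hco : i.Coprime p) (hc1 : Commute (x ^ i) c) (hc2 : Commute (x ^ p) c) :
    Commute x c := by
  have hab : (i : ℤ) * Nat.gcdA i p + (p : ℤ) * Nat.gcdB i p = 1 := by
    have := Nat.gcd_eq_gcd_ab i p
    rw [hco] at this
    exact_mod_cast this.symm
  have hx : x = (x ^ i) ^ (Nat.gcdA i p) * (x ^ p) ^ (Nat.gcdB i p) := by
    rw [← zpow_natCast x i, ← zpow_natCast x p, ← zpow_mul, ← zpow_mul, ← zpow_add, hab,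
      zpow_one]
  rw [hx]
  exact (hc1.zpow_left _).mul_left (hc2.zpow_left _)

private lemma mem_center_of_pow {G : Type*} [Group G] {p d : ℕ} {x : G}
    (hco : d.Coprime p) (h1 : x ^ d ∈ Subgroup.center G) (h2 : x ^ p ∈ Subgroup.center G) :
    x ∈ Subgroup.center G := by
  rw [Subgroup.mem_center_iff] at h1 h2 ⊢
  intro g
  have := commute_of_commute_pow (x := x) (c := g) hco (h1 g).symm (h2 g).symm
  exact this.symm

private lemma cent_eq {G : Type*} [Group G] {p i : ℕ} {x z : G}
    (hco : i.Coprime p) (hz : z ∈ Subgroup.center G) (h2 : x ^ p ∈ Subgroup.center G) :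
    Subgroup.centralizer {x ^ i * z} = Subgroup.centralizer {x} := by
  rw [Subgroup.mem_center_iff] at h2
  ext c
  rw [Subgroup.mem_centralizer_singleton_iff, Subgroup.mem_centralizer_singleton_iff]
  constructor
  · intro h
    have hzc : Commute c z := Subgroup.mem_center_iff.mp hz c
    have hc : Commute c (x ^ i * z) := h
    have hic : Commute c (x ^ i) := by simpa using hc.mul_right hzc.inv_right
    have hpc : Commute (x ^ p) c := (h2 c).symm
    exact (commute_of_commute_pow hco hic.symm hpc).symm
  · intro h
    have hzc : Commute c z := Subgroup.mem_center_iff.mp hz c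
    have hxc : Commute c x := h
    exact (hxc.pow_right i).mul_right hzc

theorem zClass_contains_cosets {G : Type*} [Group G] [Finite G] {p : ℕ} (hp : p.Prime)
    (hpG : IsPGroup p G) (hna : ¬ ∀ a b : G, a * b = b * a)
    (hexp : ∀ g : G, g ^ p ∈ Subgroup.center G)
    {x : G} (hx : x ∉ Subgroup.center G) :
    (⋃ i ∈ Finset.Icc 1 (p - 1), (x ^ i) • (Subgroup.center G : Set G)) ⊆
        {y : G | zEquiv G x y} ∧
      (p - 1) * Nat.card (Subgroup.center G) ≤ Nat.card {y : G | zEquiv G x y} := by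
  have hcop : ∀ i : ℕ, 1 ≤ i → i ≤ p - 1 → i.Coprime p := by
    intro i h1 h2
    refine Nat.Coprime.symm ((Nat.Prime.coprime_iff_not_dvd hp).mpr ?_)
    intro hdvd
    have : p ≤ i := Nat.le_of_dvd (by omega) hdvd
    have hp2 := hp.two_le
    omega
  have hmem : ∀ i : ℕ, 1 ≤ i → i ≤ p - 1 → ∀ z ∈ Subgroup.center G,
      zEquiv G x (x ^ i * z) := by
    intro i h1 h2 z hz
    exact ⟨1, by rw [one_smul, cent_eq (hcop i h1 h2) hz (hexp x)]⟩
  constructor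
  · intro y hy
    simp only [Set.mem_iUnion, Finset.mem_Icc] at hy
    obtain ⟨i, ⟨h1, h2⟩, hy⟩ := hy
    obtain ⟨z, hz, rfl⟩ := hy
    exact hmem i h1 h2 z hz
  · -- injection from Icc 1 (p-1) × center into the z-class
    have key : ∀ (a : (Finset.Icc 1 (p - 1) : Finset ℕ) × (Subgroup.center G)),
        zEquiv G x (x ^ (a.1 : ℕ) * (a.2 : G)) := by
      rintro ⟨⟨i, hi⟩, ⟨z, hz⟩⟩
      rw [Finset.mem_Icc] at hi
      exact hmem i hi.1 hi.2 z hz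
    set f : (Finset.Icc 1 (p - 1) : Finset ℕ) × (Subgroup.center G) →
        {y : G | zEquiv G x y} := fun a => ⟨x ^ (a.1 : ℕ) * (a.2 : G), key a⟩ with hf
    have hinj : Function.Injective f := by
      rintro ⟨⟨i, hi⟩, ⟨z, hz⟩⟩ ⟨⟨j, hj⟩, ⟨w, hw⟩⟩ h
      rw [Finset.mem_Icc] at hi hj
      have heq : x ^ i * z = x ^ j * w := congrArg Subtype.val h
      have habs : ∀ {a b : ℕ} {u v : G}, u ∈ Subgroup.center G → v ∈ Subgroup.center G →
          1 ≤ a → b ≤ p - 1 → a < b → x ^ a * u = x ^ b * v → False := by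
        intro a b u v hu hv h1 h2 hlt heq'
        have hpow : x ^ b = x ^ a * x ^ (b - a) := by rw [← pow_add]; congr 1; omega
        rw [hpow, mul_assoc] at heq'
        have hz' := mul_left_cancel heq'
        have hd : x ^ (b - a) = u * v⁻¹ := by rw [hz', mul_inv_cancel_right]
        have hdc : x ^ (b - a) ∈ Subgroup.center G := hd ▸ mul_mem hu (inv_mem hv)
        exact hx (mem_center_of_pow (hcop (b - a) (by omega) (by omega)) hdc (hexp x))
      have hij : i = j := by
        by_contra hne
        rcases Nat.lt_or_ge i j with hlt | hge
        · exact habs hz hw hi.1 hj.2 hlt heq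
        · exact habs hw hz hj.1 hi.2 (by omega) heq.symm
      subst hij
      have hzw : z = w := mul_left_cancel heq
      subst hzw
      rfl
    have hcard := Nat.card_le_card_of_injective f hinj
    calc (p - 1) * Nat.card (Subgroup.center G)
        = Nat.card ((Finset.Icc 1 (p - 1) : Finset ℕ) × (Subgroup.center G)) := by
          rw [Nat.card_prod, Nat.card_eq_finsetCard, Nat.card_Icc]
          simp
      _ ≤ Nat.card {y : G | zEquiv G x y} := hcard
end
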